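/- arXiv:2002.02431 — 3 statements merged into one kernel-verified Lean document; each statement's English description precedes it below -/
import Mathlib

section
/- Let U be an r-dimensional subspace of ℝ^m and let k = m − ψ̄(U) denote its nonsparsity-number (the minimum number of nonzero coordinates of a nonzero vector in U). Then the coherence μ(U) = (m/r)·max_{1≤j≤m} ‖P_U e_j‖² satisfies μ(U) ≥ (m/r)·(1/k). -/
/-!
Pick a nonzero `v ∈ U` with `k` nonzero coordinates. Its largest coordinate `v j` carries at
least a `1/k` share of `‖v‖²`, while `v j = ⟪e_j, v⟫ = ⟪P_U e_j, v⟫ ≤ ‖P_U e_j‖ ‖v‖` by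
Cauchy–Schwarz; together `1/k ≤ ‖P_U e_j‖²`.
-/

open Finset

namespace EuclideanSpace

variable {ι : Type*} [Fintype ι]

theorem exists_norm_sq_le_card_support_mul_sq {v : EuclideanSpace ℝ ι} (hv : v ≠ 0) :
    ∃ j, v j ≠ 0 ∧ ‖v‖ ^ 2 ≤ #{i | v i ≠ 0} * v j ^ 2 := by
  set S : Finset ι := {i | v i ≠ 0}
  have hS : S.Nonempty := by
    obtain ⟨i, hi⟩ : ∃ i, v i ≠ 0 := by
      by_contra! h
      exact hv (PiLp.ext h)
    exact ⟨i, by simpa [S] using hi⟩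
  obtain ⟨j, hjS, hjmax⟩ := S.exists_max_image (fun i => v i ^ 2) hS
  refine ⟨j, (mem_filter.mp hjS).2, ?_⟩
  calc ‖v‖ ^ 2 = ∑ i ∈ S, v i ^ 2 := by
        rw [EuclideanSpace.norm_sq_eq, Finset.sum_filter_of_ne fun i _ h => by simpa using h]
        simp
    _ ≤ ∑ _i ∈ S, v j ^ 2 := Finset.sum_le_sum hjmax
    _ = #S * v j ^ 2 := by rw [Finset.sum_const, nsmul_eq_mul]

end EuclideanSpace

namespace Submodule

variable {E : Type*} [NormedAddCommGroup E] [InnerProductSpace ℝ E]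

theorem real_inner_sq_le_norm_orthogonalProjectionOnto_sq_mul (K : Submodule ℝ E)
    [K.HasOrthogonalProjection] (x : E) {u : E} (hu : u ∈ K) :
    inner ℝ x u ^ 2 ≤ ‖(K.orthogonalProjectionOnto x : E)‖ ^ 2 * ‖u‖ ^ 2 := by
  have hproj := K.inner_orthogonalProjectionOnto_eq_of_mem_right ⟨u, hu⟩ x
  rw [coe_inner] at hproj
  rw [← hproj, ← mul_pow, ← sq_abs]
  exact pow_le_pow_left₀ (abs_nonneg _) (abs_real_inner_le_norm _ _) 2

variable {ι : Type*} [Fintype ι] [DecidableEq ι]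

theorem exists_one_div_card_support_le_norm_orthogonalProjectionOnto_single_sq
    (U : Submodule ℝ (EuclideanSpace ℝ ι)) {v : EuclideanSpace ℝ ι} (hvU : v ∈ U) (hv : v ≠ 0) :
    ∃ j, 1 / (#{i | v i ≠ 0} : ℝ) ≤
      ‖(U.orthogonalProjectionOnto (EuclideanSpace.single j 1) : EuclideanSpace ℝ ι)‖ ^ 2 := by
  obtain ⟨j, hj, hvj⟩ := EuclideanSpace.exists_norm_sq_le_card_support_mul_sq hv
  refine ⟨j, ?_⟩
  set p := ‖(U.orthogonalProjectionOnto (EuclideanSpace.single j 1) : EuclideanSpace ℝ ι)‖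
  have hcs : v j ^ 2 ≤ p ^ 2 * ‖v‖ ^ 2 := by
    simpa only [EuclideanSpace.inner_single_left, map_one, one_mul] using
      U.real_inner_sq_le_norm_orthogonalProjectionOnto_sq_mul (EuclideanSpace.single j 1) hvU
  have hk : (0 : ℝ) < #{i | v i ≠ 0} := Nat.cast_pos.mpr (card_pos.mpr ⟨j, by simpa using hj⟩)
  have hv2 : 0 < ‖v‖ ^ 2 := by positivity
  rw [div_le_iff₀' hk]
  refine le_of_mul_le_mul_left ?_ hv2
  calc ‖v‖ ^ 2 * 1 ≤ #{i | v i ≠ 0} * v j ^ 2 := by rwa [mul_one]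
    _ ≤ #{i | v i ≠ 0} * (p ^ 2 * ‖v‖ ^ 2) := by gcongr
    _ = ‖v‖ ^ 2 * (#{i | v i ≠ 0} * p ^ 2) := by ring

end Submodule

theorem stmt3_general (m r k : ℕ)
    (U : Submodule ℝ (EuclideanSpace ℝ (Fin m)))
    (hmin : ∃ v ∈ U, v ≠ 0 ∧ (Finset.univ.filter (fun j => v j ≠ 0)).card = k) :
    (m : ℝ) / r * (1 / k) ≤
      (m : ℝ) / r *
        ⨆ j : Fin m,
          ‖(U.orthogonalProjectionOnto (EuclideanSpace.single j 1) :
            EuclideanSpace ℝ (Fin m))‖ ^ 2 := by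
  obtain ⟨v, hvU, hv, rfl⟩ := hmin
  obtain ⟨j, hj⟩ := U.exists_one_div_card_support_le_norm_orthogonalProjectionOnto_single_sq hvU hv
  gcongr
  exact le_ciSup_of_le (Set.finite_range _).bddAbove j hj

/-- If `k` is the nonsparsity-number of an `r`-dimensional subspace `U ⊆ ℝ^m`
(the minimum number of nonzero coordinates of a nonzero vector of `U`), then the
coherence `μ(U) = (m/r)·max_j ‖P_U e_j‖²` satisfies `μ(U) ≥ (m/r)·(1/k)`. -/
theorem stmt3 (m r k : ℕ) (hm : 0 < m) (hr : 0 < r)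
    (U : Submodule ℝ (EuclideanSpace ℝ (Fin m)))
    (hdim : Module.finrank ℝ U = r)
    (hmin : ∃ v ∈ U, v ≠ 0 ∧ (Finset.univ.filter (fun j => v j ≠ 0)).card = k)
    (hlb : ∀ v ∈ U, v ≠ 0 → k ≤ (Finset.univ.filter (fun j => v j ≠ 0)).card) :
    (m : ℝ) / r * (1 / k) ≤
      (m : ℝ) / r *
        ⨆ j : Fin m,
          ‖(U.orthogonalProjectionOnto (EuclideanSpace.single j 1) :
            EuclideanSpace ℝ (Fin m))‖ ^ 2 :=
  stmt3_general m r k U hmin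
end

section
/- Let M be an m × n real matrix of rank r whose row space V has nonsparsity-number t = ψ(V). Let C ⊆ [n] be a set of columns such that rank(M restricted to columns C) < r. Then the number of columns of M not lying in the span of the columns indexed by C is at least t. -/
open scoped Classical

/-- The nonsparsity-number of a subspace `V ⊆ ℝ^ι`: the minimum number of nonzero
coordinates of a nonzero vector of `V`. -/
noncomputable def nonsparsity {ι : Type*} [Fintype ι] (V : Submodule ℝ (ι → ℝ)) : ℕ :=
  sInf {t | ∃ x ∈ V, x ≠ 0 ∧ (Finset.univ.filter (fun j => x j ≠ 0)).card = t}

/-! Since `rank M_C < rank M`, the span `W` of the columns in `C` is a proper subspace of the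
column space, so some linear functional `f` vanishes on `W` but not on every column. Then
`j ↦ f (M_{:j})` is a nonzero vector of the row space supported on columns outside `W`;
hence there are at least `ψ` such columns. -/

open Matrix Submodule Module

theorem nonsparsity_le_card_support {ι : Type*} [Fintype ι] {V : Submodule ℝ (ι → ℝ)}
    {x : ι → ℝ} (hxV : x ∈ V) (hx : x ≠ 0) :
    nonsparsity V ≤ (Finset.univ.filter (fun j => x j ≠ 0)).card :=
  Nat.sInf_le ⟨x, hxV, hx, rfl⟩

section

variable {m n : Type*}

theorem Matrix.rank_submatrix_cols {K : Type*} [Field K] [Fintype n] (M : Matrix m n K)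
    (C : Finset n) :
    (M.submatrix id (fun j : {j : n // j ∈ C} => (j : n))).rank =
      finrank K (span K (Mᵀ '' ↑C)) := by
  have h_cols : Set.range (M.submatrix id (fun j : {j : n // j ∈ C} => (j : n))).col =
      Mᵀ '' ↑C :=
    (Set.image_eq_range (fun j => Mᵀ j) (C : Set n)).symm
  rw [rank_eq_finrank_span_cols, h_cols]

variable [Fintype m]

theorem Matrix.vecMul_mem_span_range {R : Type*} [CommSemiring R] (w : m → R)
    (M : Matrix m n R) : w ᵥ* M ∈ span R (Set.range M) :=
  (range_vecMulLinear M).le (LinearMap.mem_range_self M.vecMulLinear w)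

theorem LinearMap.apply_transpose_eq_vecMul {R : Type*} [CommSemiring R]
    (f : (m → R) →ₗ[R] R) (M : Matrix m n R) :
    (fun j => f (Mᵀ j)) = (fun i => f (Pi.single i 1)) ᵥ* M := by
  funext j
  rw [f.pi_apply_eq_sum_univ]
  simp only [vecMul, dotProduct, transpose_apply, smul_eq_mul, mul_comm]
  congr! with i _ k
  simp [Pi.single_apply, eq_comm]

theorem Matrix.exists_mem_span_rows_support_subset {K : Type*} [Field K] (M : Matrix m n K)
    {W : Submodule K (m → K)} (hW : W < span K (Set.range Mᵀ)) :
    ∃ x ∈ span K (Set.range M), x ≠ 0 ∧ ∀ j, x j ≠ 0 → Mᵀ j ∉ W := by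
  obtain ⟨u, hu, huW⟩ := SetLike.exists_of_lt hW
  obtain ⟨f, hfu, hfW⟩ := W.exists_dual_map_eq_bot_of_notMem huW inferInstance
  have hf_zero : ∀ w ∈ W, f w = 0 := fun w hw =>
    (mem_bot K).mp (hfW ▸ mem_map_of_mem hw)
  refine ⟨fun j => f (Mᵀ j), ?_, ?_, fun j hj hMj => hj (hf_zero _ hMj)⟩
  · rw [f.apply_transpose_eq_vecMul]
    exact vecMul_mem_span_range _ M
  · intro hx
    have h_cols : span K (Set.range Mᵀ) ≤ LinearMap.ker f := by
      rw [span_le]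
      rintro _ ⟨j, rfl⟩
      exact congrFun hx j
    exact hfu (h_cols hu)

end

/-- If the columns of `M` indexed by `C` do not span a space of full rank `M.rank`, then
the number of columns of `M` not lying in the span of the columns indexed by `C` is at
least the nonsparsity-number of the row space of `M`. -/
theorem stmt13 (m n : ℕ) (M : Matrix (Fin m) (Fin n) ℝ) (C : Finset (Fin n))
    (hC : (M.submatrix id (fun j : {j : Fin n // j ∈ C} => (j : Fin n))).rank < M.rank) :
    nonsparsity (Submodule.span ℝ (Set.range M)) ≤
      (Finset.univ.filter
        (fun j => M.transpose j ∉ Submodule.span ℝ (M.transpose '' ↑C))).card := by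
  have h_lt : span ℝ (Mᵀ '' ↑C) < span ℝ (Set.range Mᵀ) := by
    refine lt_of_le_of_finrank_lt_finrank (span_mono (Set.image_subset_range _ _)) ?_
    rw [← M.rank_submatrix_cols]
    exact hC.trans_eq M.rank_eq_finrank_span_cols
  obtain ⟨x, hxV, hx, hx_supp⟩ := M.exists_mem_span_rows_support_subset h_lt
  calc nonsparsity (span ℝ (Set.range M))
      ≤ (Finset.univ.filter (fun j => x j ≠ 0)).card := nonsparsity_le_card_support hxV hx
    _ ≤ _ := Finset.card_le_card (Finset.monotone_filter_right _ fun j _ => hx_supp j)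
end

section
/- Let Ũ and U be two k-dimensional subspaces of ℝ^m and let θ(Ũ, U) denote the largest principal angle between them. Then μ(Ũ) ≤ 2·μ(U) + 2·(m/k)·θ(Ũ, U)², where μ denotes coherence. -/
/-!
Since `‖P_Ũ - P_U‖ = sin θ ≤ |θ|`, each column satisfies `‖P_Ũ e_j‖ ≤ ‖P_U e_j‖ + |θ|`, and
squaring with `(a + b)² ≤ 2a² + 2b²` gives `‖P_Ũ e_j‖² ≤ 2‖P_U e_j‖² + 2θ²`; take the maximum
over `j` and multiply by `m / k`.
-/

open Submodule

theorem norm_sq_le_two_mul_norm_sq_add_two_mul_norm_sub_sq {E : Type*} [SeminormedAddGroup E]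
    (a b : E) : ‖a‖ ^ 2 ≤ 2 * ‖b‖ ^ 2 + 2 * ‖a - b‖ ^ 2 := by
  have htri : ‖a‖ ≤ ‖b‖ + ‖a - b‖ := norm_le_norm_add_norm_sub' a b
  nlinarith [norm_nonneg a, sq_nonneg (‖b‖ - ‖a - b‖)]

theorem ContinuousLinearMap.norm_apply_sq_le_of_norm_sub_le {𝕜 E F : Type*}
    [NontriviallyNormedField 𝕜] [SeminormedAddCommGroup E] [SeminormedAddCommGroup F]
    [NormedSpace 𝕜 E] [NormedSpace 𝕜 F] {P Q : E →L[𝕜] F} {ε : ℝ} (hPQ : ‖P - Q‖ ≤ ε) (x : E) :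
    ‖P x‖ ^ 2 ≤ 2 * ‖Q x‖ ^ 2 + 2 * ε ^ 2 * ‖x‖ ^ 2 := by
  have hdiff : ‖P x - Q x‖ ≤ ε * ‖x‖ :=
    calc ‖P x - Q x‖ = ‖(P - Q) x‖ := rfl
      _ ≤ ‖P - Q‖ * ‖x‖ := (P - Q).le_opNorm x
      _ ≤ ε * ‖x‖ := by gcongr
  calc ‖P x‖ ^ 2 ≤ 2 * ‖Q x‖ ^ 2 + 2 * ‖P x - Q x‖ ^ 2 :=
        norm_sq_le_two_mul_norm_sq_add_two_mul_norm_sub_sq _ _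
    _ ≤ 2 * ‖Q x‖ ^ 2 + 2 * (ε * ‖x‖) ^ 2 := by gcongr
    _ = 2 * ‖Q x‖ ^ 2 + 2 * ε ^ 2 * ‖x‖ ^ 2 := by ring

theorem Real.iSup_le_mul_iSup_add {ι : Type*} [Finite ι] {f g : ι → ℝ} {a c : ℝ}
    (hg : ∀ i, 0 ≤ g i) (ha : 0 ≤ a) (hc : 0 ≤ c) (hfg : ∀ i, f i ≤ a * g i + c) :
    ⨆ i, f i ≤ a * (⨆ i, g i) + c := by
  refine Real.iSup_le (fun i => (hfg i).trans ?_) (by have := Real.iSup_nonneg hg; positivity)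
  gcongr
  exact le_ciSup (Set.finite_range g).bddAbove i

theorem stmt17_general (m k : ℕ)
    (Ut U : Submodule ℝ (EuclideanSpace ℝ (Fin m)))
    (θ : ℝ)
    (hθ : ‖Ut.subtypeL.comp (Submodule.orthogonalProjectionOnto Ut) -
            U.subtypeL.comp (Submodule.orthogonalProjectionOnto U)‖ = Real.sin θ) :
    (m : ℝ) / k *
        ⨆ j : Fin m,
          ‖(Submodule.orthogonalProjectionOnto Ut (EuclideanSpace.single j 1) :
            EuclideanSpace ℝ (Fin m))‖ ^ 2 ≤
      2 * ((m : ℝ) / k *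
        ⨆ j : Fin m,
          ‖(Submodule.orthogonalProjectionOnto U (EuclideanSpace.single j 1) :
            EuclideanSpace ℝ (Fin m))‖ ^ 2) +
      2 * ((m : ℝ) / k) * θ ^ 2 := by
  have hangle : ‖Ut.starProjection - U.starProjection‖ ≤ |θ| :=
    hθ ▸ (le_abs_self _).trans Real.abs_sin_le_abs
  have hcolumn (j : Fin m) : ‖Ut.starProjection (EuclideanSpace.single j 1)‖ ^ 2 ≤
      2 * ‖U.starProjection (EuclideanSpace.single j 1)‖ ^ 2 + 2 * θ ^ 2 := by
    simpa using ContinuousLinearMap.norm_apply_sq_le_of_norm_sub_le hangle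
      (EuclideanSpace.single j (1 : ℝ))
  have hmax := Real.iSup_le_mul_iSup_add (fun _ => sq_nonneg _) zero_le_two
    (by positivity) hcolumn
  simp only [coe_orthogonalProjectionOnto_apply]
  calc _ ≤ (m : ℝ) / k * (2 * (⨆ j, ‖U.starProjection (EuclideanSpace.single j 1)‖ ^ 2)
          + 2 * θ ^ 2) := mul_le_mul_of_nonneg_left hmax (by positivity)
    _ = _ := by ring

/-- For two `k`-dimensional subspaces `Ũ, U ⊆ ℝ^m` with largest principal angle `θ`
(characterized by `‖P_Ũ - P_U‖ = sin θ`), the coherences satisfy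
`μ(Ũ) ≤ 2·μ(U) + 2·(m/k)·θ²`. -/
theorem stmt17 (m k : ℕ) (hm : 0 < m) (hk : 0 < k)
    (Ut U : Submodule ℝ (EuclideanSpace ℝ (Fin m)))
    (hUt : Module.finrank ℝ Ut = k) (hU : Module.finrank ℝ U = k)
    (θ : ℝ) (hθ0 : 0 ≤ θ)
    (hθ : ‖Ut.subtypeL.comp (Submodule.orthogonalProjectionOnto Ut) -
            U.subtypeL.comp (Submodule.orthogonalProjectionOnto U)‖ = Real.sin θ) :
    (m : ℝ) / k *
        ⨆ j : Fin m,
          ‖(Submodule.orthogonalProjectionOnto Ut (EuclideanSpace.single j 1) :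
            EuclideanSpace ℝ (Fin m))‖ ^ 2 ≤
      2 * ((m : ℝ) / k *
        ⨆ j : Fin m,
          ‖(Submodule.orthogonalProjectionOnto U (EuclideanSpace.single j 1) :
            EuclideanSpace ℝ (Fin m))‖ ^ 2) +
      2 * ((m : ℝ) / k) * θ ^ 2 :=
  stmt17_general m k Ut U θ hθ
end
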